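/- Let P be a graph with path metric, φ : P → ℝ^d a (λ, c)-quasi-isometric embedding into Euclidean space, and (y_n)_{n∈ℕ} a sequence of reals with 1 ≤ y_n ≤ L for all n. Then the map Φ : H_P → ℝ^d × ℝ_{>0} ≅ ℍ^{d+1} defined by Φ(x, n) = (φ(x), y_n·2^n) is a quasi-isometric embedding of the combinatorial horoball into hyperbolic (d+1)-space, with constants depending only on λ, c, L and d. -/

import Mathlib

/-!
Up to a bounded additive error, the hyperbolic distance between points at heights `Y, Y'` with
horizontal separation `r` is `2 log max(r, Y, Y') - log Y - log Y'`, because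
`cosh ρ = (r² + Y² + Y'²) / (2 Y Y')`. Up to a multiplicative error, the horoball distance `D`
between `(a, m)` and `(b, n)` times `log 2` obeys the same law with `max(1 + δ, 2^m, 2^n)` in
place of the maximum, where `δ = d_P(a, b)`: a path can climb to the first level `k` with
`δ ≤ 2^k`, cross in one step and descend; conversely, along a path of length `ℓ` starting at
level `m` the level changes by at most `ℓ` and the horizontal displacement stays below
`2^(m + 2ℓ)`. A quasi-isometric embedding and the bounds `1 ≤ y_n ≤ L` change the two maxima
only by bounded factors.
-/

open SimpleGraph

/-- The Groves–Manning combinatorial horoball over a graph `G`: vertex set `V × ℕ`,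
horizontal edges between `(x, m)` and `(y, m)` whenever `dist x y ≤ 2 ^ m`, and
vertical edges between `(x, m)` and `(x, m + 1)`. -/
def Horoball {V : Type*} (G : SimpleGraph V) : SimpleGraph (V × ℕ) where
  Adj p q :=
    (p.2 = q.2 ∧ p.1 ≠ q.1 ∧ G.dist p.1 q.1 ≤ 2 ^ p.2) ∨
    (p.1 = q.1 ∧ (p.2 = q.2 + 1 ∨ q.2 = p.2 + 1))
  symm := by
    constructor
    rintro ⟨x, m⟩ ⟨y, n⟩ (⟨h1, h2, h3⟩ | ⟨h1, h2⟩)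
    · exact Or.inl ⟨h1.symm, h2.symm, by simp only at h1 h3 ⊢; rw [SimpleGraph.dist_comm, ← h1]; exact h3⟩
    · exact Or.inr ⟨h1.symm, h2.symm⟩
  loopless := by
    constructor
    rintro ⟨x, m⟩ (⟨_, h, _⟩ | ⟨_, h | h⟩)
    · exact h rfl
    · omega
    · omega

/-- The inverse hyperbolic cosine, `arcosh t = log (t + √(t² - 1))`. -/
noncomputable def arcosh (t : ℝ) : ℝ := Real.log (t + Real.sqrt (t ^ 2 - 1))

/-- The hyperbolic distance in the upper half-space model `ℝ^d × ℝ_{>0} ≅ ℍ^{d+1}`. -/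
noncomputable def hypDist {d : ℕ} (z z' : EuclideanSpace ℝ (Fin d)) (y y' : ℝ) : ℝ :=
  arcosh (1 + (‖z - z'‖ ^ 2 + (y - y') ^ 2) / (2 * y * y'))

open Real hiding arcosh

lemma log_le_add_log_of_le_mul {x y k : ℝ} (hx : 0 < x) (hy : 0 < y) (h : x ≤ k * y) :
    log x ≤ log k + log y := by
  have hk : 0 < k := pos_of_mul_pos_left (hx.trans_le h) hy.le
  rw [← log_mul hk.ne' hy.ne']
  exact log_le_log hx h

lemma log_le_arcosh {t : ℝ} (ht : 1 ≤ t) : log t ≤ arcosh t :=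
  log_le_log (by linarith) (le_add_of_nonneg_right (sqrt_nonneg _))

lemma arcosh_le_log_two_add_log {t : ℝ} (ht : 1 ≤ t) : arcosh t ≤ log 2 + log t := by
  have : √(t ^ 2 - 1) ≤ t := by
    calc √(t ^ 2 - 1) ≤ √(t ^ 2) := sqrt_le_sqrt (by linarith)
      _ = t := sqrt_sq (by linarith)
  rw [← log_mul two_ne_zero (by positivity)]
  exact log_le_log (by positivity) (by linarith)

lemma log_mul_two_pow_mem_Icc {t L : ℝ} (ht : 1 ≤ t) (htL : t ≤ L) (k : ℕ) :
    log (t * 2 ^ k) ∈ Set.Icc (k * log 2) (log L + k * log 2) := by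
  rw [log_mul (by positivity) (by positivity), log_pow]
  have h₀ := log_nonneg ht
  have h₁ := log_le_log (by positivity) htL
  constructor <;> linarith

lemma sq_max_le_sum_sq (r Y Y' : ℝ) :
    max r (max Y Y') ^ 2 ≤ r ^ 2 + Y ^ 2 + Y' ^ 2 := by
  rcases max_choice r (max Y Y') with h | h <;> rw [h]
  · nlinarith
  · rcases max_choice Y Y' with h' | h' <;> rw [h'] <;> nlinarith

lemma sum_sq_le_three_mul_sq_max {r Y Y' : ℝ} (hr : 0 ≤ r) (hY : 0 ≤ Y) (hY' : 0 ≤ Y') :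
    r ^ 2 + Y ^ 2 + Y' ^ 2 ≤ 3 * max r (max Y Y') ^ 2 := by
  have h₁ : r ^ 2 ≤ max r (max Y Y') ^ 2 := by gcongr; exact le_max_left _ _
  have h₂ : Y ^ 2 ≤ max r (max Y Y') ^ 2 := by
    gcongr; exact (le_max_left _ _).trans (le_max_right _ _)
  have h₃ : Y' ^ 2 ≤ max r (max Y Y') ^ 2 := by
    gcongr; exact (le_max_right _ _).trans (le_max_right _ _)
  linarith

theorem abs_hypDist_sub_le {d : ℕ} (z z' : EuclideanSpace ℝ (Fin d)) {Y Y' : ℝ}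
    (hY : 0 < Y) (hY' : 0 < Y') :
    |hypDist z z' Y Y' - (2 * log (max (dist z z') (max Y Y')) - log Y - log Y')| ≤
      2 * log 2 := by
  have hYY : 0 < 2 * (Y * Y') := by positivity
  have hM : 0 < max (dist z z') (max Y Y') := lt_max_of_lt_right (lt_max_of_lt_left hY)
  have ht : 1 + (‖z - z'‖ ^ 2 + (Y - Y') ^ 2) / (2 * Y * Y') =
      (dist z z' ^ 2 + Y ^ 2 + Y' ^ 2) / (2 * (Y * Y')) := by
    rw [dist_eq_norm]; field_simp; ring
  rw [hypDist, ht]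
  set M := max (dist z z') (max Y Y')
  set t := (dist z z' ^ 2 + Y ^ 2 + Y' ^ 2) / (2 * (Y * Y')) with ht_def
  have ht1 : 1 ≤ t := by
    rw [ht_def, le_div_iff₀ hYY]; nlinarith [sq_nonneg (Y - Y'), sq_nonneg (dist z z')]
  have hlow : log (M ^ 2 / (2 * (Y * Y'))) ≤ log t := by
    refine log_le_log (by positivity) ?_
    rw [ht_def]; gcongr; exact sq_max_le_sum_sq _ _ _
  have hup : log t ≤ log (2 * M ^ 2 / (Y * Y')) := by
    refine log_le_log (by positivity) ?_
    rw [ht_def, div_le_div_iff₀ hYY (by positivity)]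
    nlinarith [sum_sq_le_three_mul_sq_max (r := dist z z') dist_nonneg hY.le hY'.le]
  rw [log_div (by positivity) hYY.ne', log_mul two_ne_zero (by positivity),
    log_mul hY.ne' hY'.ne', log_pow] at hlow
  rw [log_div (x := 2 * M ^ 2) (by positivity) (by positivity),
    log_mul two_ne_zero (by positivity), log_mul hY.ne' hY'.ne', log_pow] at hup
  push_cast at hlow hup
  rw [abs_sub_le_iff]
  constructor <;> linarith [log_le_arcosh ht1, arcosh_le_log_two_add_log ht1]

lemma max_add_one_le_mul_max {lam c δ r P P' Y Y' : ℝ} (hlam : 1 ≤ lam) (hc : 0 ≤ c)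
    (hδ : 1 / lam * δ - c ≤ r) (hP : 1 ≤ P) (hPY : P ≤ Y) (hPY' : P' ≤ Y') :
    max (δ + 1) (max P P') ≤ 2 * lam * (1 + c) * max r (max Y Y') := by
  set M := max r (max Y Y')
  have hrM : r ≤ M := le_max_left _ _
  have hYM : Y ≤ M := (le_max_left _ _).trans (le_max_right _ _)
  have hY'M : Y' ≤ M := (le_max_right _ _).trans (le_max_right _ _)
  have hδ' : δ ≤ lam * (r + c) := by
    rw [one_div_mul_eq_div, sub_le_iff_le_add, div_le_iff₀ (by linarith)] at hδ
    linarith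
  have hM : 1 ≤ M := hP.trans (hPY.trans hYM)
  have hK : 1 ≤ 2 * lam * (1 + c) := by nlinarith
  have hMK : M ≤ 2 * lam * (1 + c) * M := le_mul_of_one_le_left (by linarith) hK
  refine max_le ?_ (max_le (by linarith) (by linarith))
  nlinarith [mul_le_mul_of_nonneg_left hrM (by linarith : 0 ≤ lam),
    mul_le_mul_of_nonneg_left hM (by positivity : 0 ≤ lam * c)]

lemma max_le_mul_max_add_one {lam c L δ r P P' Y Y' : ℝ} (hlam : 0 ≤ lam) (hc : 0 ≤ c)
    (hL : 0 ≤ L) (hδ : 0 ≤ δ) (hr : r ≤ lam * δ + c) (hY : Y ≤ L * P)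
    (hY' : Y' ≤ L * P') :
    max r (max Y Y') ≤ (lam + c + L) * max (δ + 1) (max P P') := by
  set M := max (δ + 1) (max P P')
  have hδM : δ + 1 ≤ M := le_max_left _ _
  have hPM : P ≤ M := (le_max_left _ _).trans (le_max_right _ _)
  have hP'M : P' ≤ M := (le_max_right _ _).trans (le_max_right _ _)
  refine max_le ?_ (max_le ?_ ?_) <;> nlinarith

namespace Horoball

variable {V : Type*} {G : SimpleGraph V}

lemma snd_le_of_adj {p q : V × ℕ} (h : (Horoball G).Adj p q) : p.2 ≤ q.2 + 1 := by
  rcases h with ⟨h, -⟩ | ⟨-, h | h⟩ <;> omega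

lemma dist_fst_le_of_adj {p q : V × ℕ} (h : (Horoball G).Adj p q) :
    G.dist p.1 q.1 ≤ 2 ^ p.2 := by
  rcases h with ⟨-, -, h⟩ | ⟨h, -⟩
  · exact h
  · simp [h]

lemma adj_of_adj {u v : V} (h : G.Adj u v) (k : ℕ) : (Horoball G).Adj (u, k) (v, k) :=
  Or.inl ⟨rfl, h.ne, by rw [dist_eq_one_iff_adj.2 h]; exact Nat.one_le_two_pow⟩

lemma exists_walk_vertical (a : V) {m k : ℕ} (h : m ≤ k) :
    ∃ w : (Horoball G).Walk (a, m) (a, k), w.length = k - m := by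
  induction k, h using Nat.le_induction with
  | base => exact ⟨.nil, by simp⟩
  | succ k hmk ih =>
    obtain ⟨w, hw⟩ := ih
    have hup : (Horoball G).Adj (a, k) (a, k + 1) := Or.inr ⟨rfl, Or.inr rfl⟩
    exact ⟨w.concat hup, by rw [Walk.length_concat, hw]; omega⟩

theorem connected (hG : G.Connected) : (Horoball G).Connected := by
  have := hG.nonempty
  have hup (x : V) (k : ℕ) : (Horoball G).Reachable (x, 0) (x, k) :=
    let ⟨w, _⟩ := exists_walk_vertical (G := G) x k.zero_le; ⟨w⟩
  refine ⟨fun ⟨a, m⟩ ⟨b, n⟩ => ?_⟩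
  exact ((hup a m).symm.trans ((hG a b).map ⟨(·, 0), fun h => adj_of_adj h 0⟩)).trans (hup b n)

lemma snd_le_add_length {p q : V × ℕ} (w : (Horoball G).Walk p q) : p.2 ≤ q.2 + w.length := by
  induction w with
  | nil => simp
  | cons h _ ih => have := snd_le_of_adj h; simp only [Walk.length_cons]; omega

lemma dist_fst_add_one_le (hG : G.Connected) {p q : V × ℕ} (w : (Horoball G).Walk p q) :
    G.dist p.1 q.1 + 1 ≤ 2 ^ (p.2 + 2 * w.length) := by
  induction w with
  | nil => simp [Nat.one_le_two_pow]
  | @cons u v x h w ih =>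
    have hv : 2 ^ (v.2 + 2 * w.length) ≤ 2 ^ (u.2 + 1 + 2 * w.length) :=
      Nat.pow_le_pow_right two_pos (by have := snd_le_of_adj h.symm; omega)
    have hu : 2 ^ u.2 ≤ 2 ^ (u.2 + 1 + 2 * w.length) := Nat.pow_le_pow_right two_pos (by omega)
    calc G.dist u.1 x.1 + 1 ≤ G.dist u.1 v.1 + (G.dist v.1 x.1 + 1) := by
          have := hG.dist_triangle (u := u.1) (v := v.1) (w := x.1); omega
      _ ≤ 2 ^ u.2 + 2 ^ (u.2 + 1 + 2 * w.length) :=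
          add_le_add (dist_fst_le_of_adj h) (ih.trans hv)
      _ ≤ 2 ^ (u.2 + 2 * (w.cons h).length) := by
          rw [Walk.length_cons, show u.2 + 2 * (w.length + 1) = u.2 + 1 + 2 * w.length + 1 by ring,
            pow_succ]
          omega

lemma max_le_two_pow_add_length (hG : G.Connected) {a b : V} {m n : ℕ}
    (w : (Horoball G).Walk (a, m) (b, n)) :
    max (G.dist a b + 1) (max (2 ^ m) (2 ^ n)) ≤ 2 ^ (m + 2 * w.length) := by
  have hn : n ≤ m + w.length := by simpa using snd_le_add_length w.reverse
  refine max_le (dist_fst_add_one_le hG w) (max_le ?_ ?_) <;>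
    exact Nat.pow_le_pow_right two_pos (by omega)

theorem sq_max_le_two_pow (hG : G.Connected) (a b : V) (m n : ℕ) :
    max (G.dist a b + 1) (max (2 ^ m) (2 ^ n)) ^ 2 ≤
      2 ^ (4 * (Horoball G).dist (a, m) (b, n) + m + n) := by
  obtain ⟨w, hw⟩ := (connected hG).exists_walk_length_eq_dist (a, m) (b, n)
  have h₁ := max_le_two_pow_add_length hG w
  have h₂ := max_le_two_pow_add_length hG w.reverse
  rw [dist_comm, max_comm (2 ^ n), Walk.length_reverse] at h₂
  rw [hw] at h₁ h₂
  calc _ ≤ 2 ^ (m + 2 * (Horoball G).dist (a, m) (b, n)) *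
        2 ^ (n + 2 * (Horoball G).dist (a, m) (b, n)) := by rw [sq]; exact Nat.mul_le_mul h₁ h₂
    _ = _ := by ring

theorem dist_le_of_dist_le_two_pow (hG : G.Connected) {a b : V} {m n k : ℕ} (hm : m ≤ k)
    (hn : n ≤ k) (hab : G.dist a b ≤ 2 ^ k) :
    (Horoball G).dist (a, m) (b, n) ≤ (k - m) + 1 + (k - n) := by
  have hconn := connected hG
  obtain ⟨wa, hwa⟩ := exists_walk_vertical (G := G) a hm
  obtain ⟨wb, hwb⟩ := exists_walk_vertical (G := G) b hn
  have hcross : (Horoball G).dist (a, k) (b, k) ≤ 1 := by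
    by_cases h : a = b
    · simp [h]
    · exact (dist_eq_one_iff_adj.2 (Or.inl ⟨rfl, h, hab⟩)).le
  have h₁ := hconn.dist_triangle (u := (a, m)) (v := (a, k)) (w := (b, n))
  have h₂ := hconn.dist_triangle (u := (a, k)) (v := (b, k)) (w := (b, n))
  have ha := dist_le wa
  have hb := dist_le wb.reverse
  rw [Walk.length_reverse] at hb
  omega

theorem two_pow_dist_add_le (hG : G.Connected) (a b : V) (m n : ℕ) :
    2 ^ ((Horoball G).dist (a, m) (b, n) + m + n) ≤
      2 ^ 3 * max (G.dist a b + 1) (max (2 ^ m) (2 ^ n)) ^ 2 := by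
  set M := max (G.dist a b + 1) (max (2 ^ m) (2 ^ n))
  set k := Nat.log 2 M
  have hM : M ≠ 0 := (Nat.succ_pos _).trans_le (le_max_left _ _) |>.ne'
  have hm : m ≤ k + 1 :=
    (Nat.le_log_of_pow_le one_lt_two ((le_max_left _ _).trans (le_max_right _ _))).trans k.le_succ
  have hn : n ≤ k + 1 :=
    (Nat.le_log_of_pow_le one_lt_two ((le_max_right _ _).trans (le_max_right _ _))).trans k.le_succ
  have hab : G.dist a b ≤ 2 ^ (k + 1) :=
    (Nat.lt_of_succ_le (le_max_left _ _)).le.trans (Nat.lt_pow_succ_log_self one_lt_two M).le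
  have hD := dist_le_of_dist_le_two_pow hG hm hn hab
  calc 2 ^ ((Horoball G).dist (a, m) (b, n) + m + n) ≤ 2 ^ (3 + 2 * k) :=
        Nat.pow_le_pow_right two_pos (by omega)
    _ = 2 ^ 3 * (2 ^ k) ^ 2 := by ring
    _ ≤ 2 ^ 3 * M ^ 2 := by gcongr; exact Nat.pow_log_le_self 2 hM

theorem dist_add_mul_log_two_le (hG : G.Connected) (a b : V) (m n : ℕ) :
    ((Horoball G).dist (a, m) (b, n) + m + n : ℝ) * log 2 ≤
      3 * log 2 + 2 * log (max ((G.dist a b : ℝ) + 1) (max (2 ^ m) (2 ^ n))) := by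
  have h : (2 : ℝ) ^ ((Horoball G).dist (a, m) (b, n) + m + n) ≤
      2 ^ 3 * max ((G.dist a b : ℝ) + 1) (max (2 ^ m) (2 ^ n)) ^ 2 := by
    exact_mod_cast two_pow_dist_add_le hG a b m n
  have := log_le_log (by positivity) h
  rw [log_mul (by positivity) (by positivity), log_pow, log_pow, log_pow] at this
  push_cast at this
  linarith

theorem two_mul_log_max_le (hG : G.Connected) (a b : V) (m n : ℕ) :
    2 * log (max ((G.dist a b : ℝ) + 1) (max (2 ^ m) (2 ^ n))) ≤
      (4 * (Horoball G).dist (a, m) (b, n) + m + n : ℝ) * log 2 := by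
  have h : max ((G.dist a b : ℝ) + 1) (max (2 ^ m) (2 ^ n)) ^ 2 ≤
      2 ^ (4 * (Horoball G).dist (a, m) (b, n) + m + n) := by
    exact_mod_cast sq_max_le_two_pow hG a b m n
  have := log_le_log (by positivity) h
  rw [log_pow, log_pow] at this
  push_cast at this
  linarith

end Horoball

/-- If `φ : P → ℝ^d` is a `(λ, c)`-quasi-isometric embedding of a connected graph into
Euclidean space and `1 ≤ y_n ≤ L`, then `Φ(x, n) = (φ x, y_n · 2^n)` is a
quasi-isometric embedding of the combinatorial horoball into hyperbolic `(d+1)`-space,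
with constants depending only on `λ`, `c`, `L` and `d`. -/
theorem horoball_to_hyperbolic_qie (lam c L : ℝ) (d : ℕ)
    (hlam : 1 ≤ lam) (hc : 0 ≤ c) (hL : 1 ≤ L) :
    ∃ lam' c' : ℝ, 1 ≤ lam' ∧ 0 ≤ c' ∧
      ∀ (V : Type) (G : SimpleGraph V), G.Connected →
        ∀ (φ : V → EuclideanSpace ℝ (Fin d)) (y : ℕ → ℝ),
          (∀ n : ℕ, 1 ≤ y n ∧ y n ≤ L) →
          (∀ a b : V,
            (1 / lam) * (G.dist a b : ℝ) - c ≤ dist (φ a) (φ b) ∧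
            dist (φ a) (φ b) ≤ lam * (G.dist a b : ℝ) + c) →
          ∀ (a b : V) (m n : ℕ),
            (1 / lam') * ((Horoball G).dist (a, m) (b, n) : ℝ) - c' ≤
              hypDist (φ a) (φ b) (y m * 2 ^ m) (y n * 2 ^ n) ∧
            hypDist (φ a) (φ b) (y m * 2 ^ m) (y n * 2 ^ n) ≤
              lam' * ((Horoball G).dist (a, m) (b, n) : ℝ) + c' := by
  have hA : 0 ≤ log (2 * lam * (1 + c)) := log_nonneg (by nlinarith)
  have hB : 0 ≤ log (lam + c + L) := log_nonneg (by linarith)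
  have hlog2 : 1 / 4 ≤ log 2 ∧ log 2 ≤ 1 :=
    ⟨by linarith [log_two_gt_d9], by linarith [log_two_lt_d9]⟩
  -- `λ' = 4` absorbs both the factor `4` of `Horoball.two_mul_log_max_le` and `1 / log 2`.
  refine ⟨4, 5 * log 2 + 2 * log (2 * lam * (1 + c)) + 2 * log (lam + c + L) + 2 * log L,
    by norm_num, by linarith [log_nonneg hL], ?_⟩
  intro V G hG φ y hy hφ a b m n
  have hY (k : ℕ) : 2 ^ k ≤ y k * 2 ^ k ∧ y k * 2 ^ k ≤ L * 2 ^ k :=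
    ⟨le_mul_of_one_le_left (by positivity) (hy k).1, by gcongr; exact (hy k).2⟩
  have hY₀ (k : ℕ) : 0 < y k * 2 ^ k := (pow_pos two_pos k).trans_le (hY k).1
  have hlogY (k : ℕ) := log_mul_two_pow_mem_Icc (hy k).1 (hy k).2 k
  have hρ := abs_sub_le_iff.1 (abs_hypDist_sub_le (φ a) (φ b) (hY₀ m) (hY₀ n))
  have hD_le := Horoball.dist_add_mul_log_two_le hG a b m n
  have hD_ge := Horoball.two_mul_log_max_le hG a b m n
  have hMρ₀ : 0 < max (dist (φ a) (φ b)) (max (y m * 2 ^ m) (y n * 2 ^ n)) :=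
    lt_max_of_lt_right (lt_max_of_lt_left (hY₀ m))
  have hMh := log_le_add_log_of_le_mul (by positivity) hMρ₀
    (max_add_one_le_mul_max hlam hc (hφ a b).1 (one_le_pow₀ one_le_two) (hY m).1
      (hY n).1)
  have hMρ := log_le_add_log_of_le_mul hMρ₀ (by positivity)
    (max_le_mul_max_add_one (by linarith) hc (by linarith) (Nat.cast_nonneg _) (hφ a b).2
      (hY m).2 (hY n).2)
  have hD₀ : (0 : ℝ) ≤ (Horoball G).dist (a, m) (b, n) := Nat.cast_nonneg _
  have hD₁ := mul_le_mul_of_nonneg_left hlog2.1 hD₀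
  have hD₂ := mul_le_mul_of_nonneg_left hlog2.2 hD₀
  constructor <;> linarith [hρ.1, hρ.2, (hlogY m).1, (hlogY m).2, (hlogY n).1, (hlogY n).2]
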